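/- Multilevel complexity theorem, logarithmic cost case. Let η > 1, 0 < ε_0 ≤ 1, and define ε_ℓ := η^{−ℓ}·ε_0 for ℓ = 0, 1, 2, …. Let s > 0, p ≥ 0, and c_v, c_w > 0. Suppose for every L ≥ 0 the level variances and costs satisfy 0 < v_ℓ ≤ c_v·ε_ℓ^{2s} and 0 < w_ℓ ≤ c_w·(ℓ+1)^p for ℓ = 0, …, L, and define the optimal sample numbers M_ℓ := ε_L^{−2}·√(v_ℓ/w_ℓ)·∑_{k=0}^L √(v_k·w_k). Then there exists a constant C > 0, depending only on η, s, p, c_v, c_w and ε_0 but NOT on L, such that the expected total work satisfies W_tot := ∑_{ℓ=0}^L M_ℓ·w_ℓ ≤ C·ε_L^{−2}. Consequently the total error e_tot = O(ε_L) satisfies the optimal rate e_tot = O(W_tot^{−1/2}). -/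

import Mathlib

/-!
With the optimal sample numbers the total work equals `ε_L⁻² (∑ₖ √(v_k w_k))²` exactly, so it
suffices to bound `∑ₖ √(v_k w_k)` independently of `L`. The level bounds give
`√(v_k w_k) ≤ √(c_v c_w) ε₀ˢ (k+1)^(p/2) r^k` with `r = η^(-s) < 1`, and a polynomial times a
geometric sequence is summable. The rate `ε_L ≲ W_tot^(-1/2)` is the work bound solved for `ε_L`.
-/

open Real Finset

theorem summable_add_one_rpow_mul_geometric (a : ℝ) {r : ℝ} (hr0 : 0 < r) (hr1 : r < 1) :
    Summable fun k : ℕ => ((k : ℝ) + 1) ^ a * r ^ k := by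
  have hshift : Summable fun k : ℕ => ((k : ℝ) + 1) ^ ⌈a⌉₊ * r ^ k := by
    have h : Summable fun k : ℕ => ((k + 1 : ℕ) : ℝ) ^ ⌈a⌉₊ * r ^ (k + 1) :=
      (summable_nat_add_iff (f := fun m : ℕ => (m : ℝ) ^ ⌈a⌉₊ * r ^ m) 1).2 <|
        summable_pow_mul_geometric_of_norm_lt_one ⌈a⌉₊
          (by rwa [norm_of_nonneg hr0.le] : ‖r‖ < 1)
    refine (summable_mul_left_iff hr0.ne').1 (h.congr fun k => ?_)
    push_cast
    ring
  refine hshift.of_nonneg_of_le (fun k => by positivity) fun k => ?_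
  gcongr
  rw [← rpow_natCast]
  exact rpow_le_rpow_of_exponent_le (by linarith [k.cast_nonneg (α := ℝ)]) (Nat.le_ceil a)

theorem sqrt_div_mul_self_eq_sqrt_mul (x : ℝ) {y : ℝ} (hy : 0 ≤ y) : √(x / y) * y = √(x * y) := by
  rcases hy.eq_or_lt with rfl | hy
  · simp
  rw [sqrt_div' x hy.le, sqrt_mul' x hy.le, div_mul_eq_mul_div, div_eq_iff (sqrt_pos.2 hy).ne',
    mul_assoc, mul_self_sqrt hy.le]

theorem sqrt_mul_rpow {c x : ℝ} (hc : 0 ≤ c) (hx : 0 ≤ x) (t : ℝ) :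
    √(c * x ^ t) = √c * x ^ (t / 2) := by
  rw [sqrt_mul hc, sqrt_eq_rpow (x ^ t), ← rpow_mul hx, mul_one_div]

theorem le_sqrt_mul_rpow_neg_half {ε W C : ℝ} (hε : 0 < ε) (hW : 0 < W) (h : W ≤ C * ε⁻¹ ^ 2) :
    ε ≤ √C * W ^ (-(1 / 2) : ℝ) := by
  have hsqrt : √W ≤ √C * ε⁻¹ := by
    simpa only [sqrt_mul' C (sq_nonneg _), sqrt_sq (inv_nonneg.2 hε.le)] using sqrt_le_sqrt h
  rw [rpow_neg hW.le, ← sqrt_eq_rpow, ← div_eq_mul_inv, le_div_iff₀ (sqrt_pos.2 hW)]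
  calc ε * √W ≤ ε * (√C * ε⁻¹) := by gcongr
    _ = √C := by field_simp

theorem mlmc_total_work_eq {ι : Type*} [Fintype ι] (a : ℝ) (v w : ι → ℝ) (hw : ∀ i, 0 ≤ w i) :
    ∑ i, a * √(v i / w i) * (∑ k, √(v k * w k)) * w i = a * (∑ k, √(v k * w k)) ^ 2 := by
  calc _ = ∑ i, a * (∑ k, √(v k * w k)) * √(v i * w i) := by
        refine sum_congr rfl fun i _ => ?_
        rw [← sqrt_div_mul_self_eq_sqrt_mul _ (hw i)]
        ring
    _ = _ := by rw [← mul_sum, sq, mul_assoc]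

theorem level_width_rpow {η ε₀ : ℝ} (hη : 0 ≤ η) (hε₀ : 0 ≤ ε₀) (s : ℝ) (k : ℕ) :
    (η ^ (-(k : ℝ)) * ε₀) ^ s = (η ^ (-s)) ^ k * ε₀ ^ s := by
  rw [mul_rpow (rpow_nonneg hη _) hε₀, ← rpow_mul hη, ← rpow_mul_natCast hη]
  ring_nf

theorem sqrt_var_mul_cost_le {η ε₀ s p cv cw v w : ℝ} (k : ℕ) (hη : 0 ≤ η) (hε₀ : 0 ≤ ε₀)
    (hcv : 0 ≤ cv) (hcw : 0 ≤ cw) (hv : v ≤ cv * (η ^ (-(k : ℝ)) * ε₀) ^ (2 * s))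
    (hw0 : 0 ≤ w) (hw : w ≤ cw * ((k : ℝ) + 1) ^ p) :
    √(v * w) ≤ √cv * √cw * ε₀ ^ s * (((k : ℝ) + 1) ^ (p / 2) * (η ^ (-s)) ^ k) := by
  have hεk : 0 ≤ η ^ (-(k : ℝ)) * ε₀ := mul_nonneg (rpow_nonneg hη _) hε₀
  calc √(v * w) ≤ √(cv * (η ^ (-(k : ℝ)) * ε₀) ^ (2 * s) * (cw * ((k : ℝ) + 1) ^ p)) :=
        sqrt_le_sqrt (mul_le_mul hv hw hw0 (by positivity))
    _ = √cv * (η ^ (-(k : ℝ)) * ε₀) ^ s * (√cw * ((k : ℝ) + 1) ^ (p / 2)) := by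
        rw [sqrt_mul (by positivity), sqrt_mul_rpow hcv hεk, sqrt_mul_rpow hcw (by positivity),
          mul_div_cancel_left₀ s two_ne_zero]
    _ = _ := by
        rw [level_width_rpow hη hε₀]
        ring

theorem mlmc_complexity_logarithmic_cost_general
    (η ε₀ s p cv cw : ℝ)
    (hη : 1 < η) (hε₀ : 0 < ε₀)
    (hs : 0 < s) (hcv : 0 < cv) (hcw : 0 < cw) :
    ∃ C > (0 : ℝ), ∀ L : ℕ, ∀ v w : Fin (L + 1) → ℝ,
      (∀ ℓ : Fin (L + 1), 0 < v ℓ ∧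
        v ℓ ≤ cv * (η ^ (-((ℓ : ℕ) : ℝ)) * ε₀) ^ (2 * s)) →
      (∀ ℓ : Fin (L + 1), 0 < w ℓ ∧
        w ℓ ≤ cw * (((ℓ : ℕ) : ℝ) + 1) ^ p) →
      (let εL : ℝ := η ^ (-(L : ℝ)) * ε₀
       let M : Fin (L + 1) → ℝ :=
         fun ℓ => εL⁻¹ ^ 2 * Real.sqrt (v ℓ / w ℓ) * ∑ k, Real.sqrt (v k * w k)
       (∑ ℓ, M ℓ * w ℓ ≤ C * εL⁻¹ ^ 2) ∧
       (εL ≤ Real.sqrt C * (∑ ℓ, M ℓ * w ℓ) ^ (-(1 / 2 : ℝ)))) := by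
  have hη0 : 0 < η := one_pos.trans hη
  have hr0 : 0 < η ^ (-s) := rpow_pos_of_pos hη0 _
  have hr1 : η ^ (-s) < 1 := rpow_lt_one_of_one_lt_of_neg hη (neg_neg_of_pos hs)
  have hsum := summable_add_one_rpow_mul_geometric (p / 2) hr0 hr1
  set D := √cv * √cw * ε₀ ^ s * ∑' k : ℕ, ((k : ℝ) + 1) ^ (p / 2) * (η ^ (-s)) ^ k
  have hT : 0 < ∑' k : ℕ, ((k : ℝ) + 1) ^ (p / 2) * (η ^ (-s)) ^ k :=
    hsum.tsum_pos (fun k => by positivity) 0 (by simp)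
  refine ⟨D ^ 2, by positivity, fun L v w hv hw => ?_⟩
  intro εL M
  have hεL : 0 < εL := mul_pos (rpow_pos_of_pos hη0 _) hε₀
  have hwork : ∑ ℓ, M ℓ * w ℓ = εL⁻¹ ^ 2 * (∑ k, √(v k * w k)) ^ 2 :=
    mlmc_total_work_eq _ v w fun ℓ => (hw ℓ).1.le
  have hS0 : 0 < ∑ k, √(v k * w k) :=
    sum_pos (fun k _ => sqrt_pos.2 (mul_pos (hv k).1 (hw k).1)) univ_nonempty
  have hSD : ∑ k, √(v k * w k) ≤ D := calc
    _ ≤ ∑ k : Fin (L + 1),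
          √cv * √cw * ε₀ ^ s * ((((k : ℕ) : ℝ) + 1) ^ (p / 2) * (η ^ (-s)) ^ (k : ℕ)) :=
        sum_le_sum fun k _ => sqrt_var_mul_cost_le k hη0.le hε₀.le hcv.le hcw.le (hv k).2
          (hw k).1.le (hw k).2
    _ ≤ D := by
        rw [← mul_sum, Fin.sum_univ_eq_sum_range (fun k => ((k : ℝ) + 1) ^ (p / 2) * _)]
        exact mul_le_mul_of_nonneg_left (hsum.sum_le_tsum _ fun k _ => by positivity)
          (by positivity)
  have hbound : ∑ ℓ, M ℓ * w ℓ ≤ D ^ 2 * εL⁻¹ ^ 2 := by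
    rw [hwork, mul_comm]
    gcongr
  exact ⟨hbound, le_sqrt_mul_rpow_neg_half hεL (by rw [hwork]; positivity) hbound⟩

/-- **Multilevel complexity theorem, logarithmic cost case.**
With level widths `ε_ℓ = η^(−ℓ)·ε₀`, level variances `v ℓ ≤ c_v·ε_ℓ^(2s)` and costs
`w ℓ ≤ c_w·(ℓ+1)^p` (corresponding to `O(log^p(ε_ℓ⁻¹))`), the optimal sample numbers
`M ℓ = ε_L⁻²·√(v ℓ / w ℓ)·∑ k, √(v k · w k)` give a total work `W_tot ≤ C·ε_L⁻²`
with `C` independent of `L`, and hence the optimal rate `ε_L ≤ √C · W_tot^(−1/2)`. -/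
theorem mlmc_complexity_logarithmic_cost
    (η ε₀ s p cv cw : ℝ)
    (hη : 1 < η) (hε₀ : 0 < ε₀) (hε₀1 : ε₀ ≤ 1)
    (hs : 0 < s) (hp : 0 ≤ p) (hcv : 0 < cv) (hcw : 0 < cw) :
    ∃ C > (0 : ℝ), ∀ L : ℕ, ∀ v w : Fin (L + 1) → ℝ,
      (∀ ℓ : Fin (L + 1), 0 < v ℓ ∧
        v ℓ ≤ cv * (η ^ (-((ℓ : ℕ) : ℝ)) * ε₀) ^ (2 * s)) →
      (∀ ℓ : Fin (L + 1), 0 < w ℓ ∧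
        w ℓ ≤ cw * (((ℓ : ℕ) : ℝ) + 1) ^ p) →
      (let εL : ℝ := η ^ (-(L : ℝ)) * ε₀
       let M : Fin (L + 1) → ℝ :=
         fun ℓ => εL⁻¹ ^ 2 * Real.sqrt (v ℓ / w ℓ) * ∑ k, Real.sqrt (v k * w k)
       (∑ ℓ, M ℓ * w ℓ ≤ C * εL⁻¹ ^ 2) ∧
       (εL ≤ Real.sqrt C * (∑ ℓ, M ℓ * w ℓ) ^ (-(1 / 2 : ℝ)))) :=
  mlmc_complexity_logarithmic_cost_general η ε₀ s p cv cw hη hε₀ hs hcv hcw
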